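/- arXiv:2604.27743 — 2 statements merged into one kernel-verified Lean document; each statement's English description precedes it below -/
import Mathlib

section
/- If W satisfies the Markov chain Y – X – W and I(X;Y|W)=0, then I(X;W) ≥ H(W*), where W* = p(Y|X) is the minimal sufficient statistic; moreover I(X;W*) = H(W*). -/
open Real Finset

noncomputable section

variable {X Y W : Type*} [Fintype X] [Fintype Y] [Fintype W]

/-- Marginal `p(x)` of a joint pmf on `X × Y × W`. -/
def pX (p : X → Y → W → ℝ) (x : X) : ℝ := ∑ y, ∑ w, p x y w

/-- Marginal `p(y)`. -/
def pY (p : X → Y → W → ℝ) (y : Y) : ℝ := ∑ x, ∑ w, p x y w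

/-- Marginal `p(w)`. -/
def pW (p : X → Y → W → ℝ) (w : W) : ℝ := ∑ x, ∑ y, p x y w

/-- Marginal `p(x,y)`. -/
def pXY (p : X → Y → W → ℝ) (x : X) (y : Y) : ℝ := ∑ w, p x y w

/-- Marginal `p(x,w)`. -/
def pXW (p : X → Y → W → ℝ) (x : X) (w : W) : ℝ := ∑ y, p x y w

/-- Marginal `p(y,w)`. -/
def pYW (p : X → Y → W → ℝ) (y : Y) (w : W) : ℝ := ∑ x, p x y w

/-- Conditional `p(y|x)`. -/
def condYX (p : X → Y → W → ℝ) (x : X) (y : Y) : ℝ := pXY p x y / pX p x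

/-- Conditional `p(y|w)` (the decoder distribution). -/
def condYW (p : X → Y → W → ℝ) (w : W) (y : Y) : ℝ := pYW p y w / pW p w

/-- `p` is a probability mass function on `X × Y × W`. -/
def IsJoint (p : X → Y → W → ℝ) : Prop :=
  (∀ x y w, 0 ≤ p x y w) ∧ ∑ x, ∑ y, ∑ w, p x y w = 1

/-- The Markov chain `Y – X – W`: `p(w|x,y) = p(w|x)` whenever `p(x,y) > 0`. -/
def Markov (p : X → Y → W → ℝ) : Prop :=
  ∀ x y w, 0 < pXY p x y → p x y w / pXY p x y = pXW p x w / pX p x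

/-- Conditional entropy `H(Y|X)` (natural log). -/
def HYgX (p : X → Y → W → ℝ) : ℝ := -∑ x, ∑ y, pXY p x y * log (condYX p x y)

/-- Conditional entropy `H(Y|W)`. -/
def HYgW (p : X → Y → W → ℝ) : ℝ := -∑ w, ∑ y, pYW p y w * log (condYW p w y)

/-- Conditional mutual information `I(X;Y|W)`. -/
def IXYgW (p : X → Y → W → ℝ) : ℝ :=
  ∑ x, ∑ y, ∑ w, p x y w * log (p x y w * pW p w / (pXW p x w * pYW p y w))

/-- Conditional mutual information `I(X;W|Y)`. -/
def IXWgY (p : X → Y → W → ℝ) : ℝ :=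
  ∑ x, ∑ y, ∑ w, p x y w * log (p x y w * pY p y / (pXY p x y * pYW p y w))

/-- Mutual information `I(X;Y)`. -/
def IXY (p : X → Y → W → ℝ) : ℝ :=
  ∑ x, ∑ y, pXY p x y * log (pXY p x y / (pX p x * pY p y))

/-- Mutual information `I(W;Y)`. -/
def IWY (p : X → Y → W → ℝ) : ℝ :=
  ∑ y, ∑ w, pYW p y w * log (pYW p y w / (pY p y * pW p w))

/-- Mutual information `I(X;W)`. -/
def IXW (p : X → Y → W → ℝ) : ℝ :=
  ∑ x, ∑ w, pXW p x w * log (pXW p x w / (pX p x * pW p w))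

/-- Kullback–Leibler divergence between pmfs on `Y` (natural log). -/
def klD (q r : Y → ℝ) : ℝ := ∑ y, q y * log (q y / r y)

open scoped Classical

/-- Marginal `p(x)` of a joint pmf on `X × Y`. -/
def pX2 (q : X → Y → ℝ) (x : X) : ℝ := ∑ y, q x y

/-- Conditional `p(y|x)` for a pair joint. -/
def condYX2 (q : X → Y → ℝ) (x : X) (y : Y) : ℝ := q x y / pX2 q x

/-- `f*(x) = p(Y|x)` as a point in the simplex over `Y`. -/
def fstar (q : X → Y → ℝ) (x : X) : Y → ℝ := fun y => condYX2 q x y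

/-- The finite set of values taken by a statistic `h : X → T`. -/
def supp {T : Type*} (h : X → T) : Finset T := Finset.image h Finset.univ

/-- Law of `h(X)`. -/
def pT {T : Type*} (q : X → Y → ℝ) (h : X → T) (t : T) : ℝ :=
  ∑ x, if h x = t then pX2 q x else 0

/-- Entropy `H(h(X))`. -/
def HT {T : Type*} (q : X → Y → ℝ) (h : X → T) : ℝ :=
  -∑ t ∈ supp h, pT q h t * log (pT q h t)

/-- Mutual information `I(X; h(X))` for a deterministic statistic `h`. -/
def ITX {T : Type*} (q : X → Y → ℝ) (h : X → T) : ℝ :=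
  ∑ x, ∑ t ∈ supp h,
    (if h x = t then pX2 q x else 0) *
      log ((if h x = t then pX2 q x else 0) / (pX2 q x * pT q h t))


/-- Pointwise bound: `a * log (a/b) ≥ a - b` when `b > 0` if `a > 0`. -/
lemma term_nonneg {a b : ℝ} (ha : 0 ≤ a) (hb : 0 ≤ b) (hab : 0 < a → 0 < b) :
    a - b ≤ a * log (a / b) := by
  rcases eq_or_lt_of_le ha with h | h
  · simp [← h, hb]
  · have hb' := hab h
    have h1 : log (b / a) ≤ b / a - 1 := Real.log_le_sub_one_of_pos (by positivity)
    have h2 : log (a / b) = - log (b / a) := by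
      rw [Real.log_div h.ne' hb'.ne', Real.log_div hb'.ne' h.ne']; ring
    rw [h2]
    have := mul_le_mul_of_nonneg_left h1 h.le
    have hba : a * (b / a - 1) = b - a := by field_simp
    nlinarith
/-- Strict version: equality forces `a = b`. -/
lemma term_eq {a b : ℝ} (ha : 0 ≤ a) (hb : 0 ≤ b) (hab : 0 < a → 0 < b)
    (h : a * log (a / b) = a - b) : a = b := by
  rcases eq_or_lt_of_le ha with h0 | h0
  · rw [← h0] at h ⊢
    have : b = 0 := by simpa using h.symm
    exact this.symm
  · have hb' := hab h0
    by_contra hne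
    have h1 : log (b / a) < b / a - 1 :=
      Real.log_lt_sub_one_of_pos (by positivity) (by
        intro hc; apply hne
        field_simp at hc; linarith)
    have h2 : log (a / b) = - log (b / a) := by
      rw [Real.log_div h0.ne' hb'.ne', Real.log_div hb'.ne' h0.ne']; ring
    rw [h2] at h
    have := mul_lt_mul_of_pos_left h1 h0
    have hba : a * (b / a - 1) = b - a := by field_simp
    nlinarith

/-- Gibbs: if the KL-type sum is zero and masses match, distributions agree. -/
lemma gibbs_eq {ι : Type*} (s : Finset ι) (a b : ι → ℝ)
    (ha : ∀ i ∈ s, 0 ≤ a i) (hb : ∀ i ∈ s, 0 ≤ b i)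
    (hab : ∀ i ∈ s, 0 < a i → 0 < b i)
    (hsum : ∑ i ∈ s, a i = ∑ i ∈ s, b i)
    (hkl : ∑ i ∈ s, a i * log (a i / b i) = 0) :
    ∀ i ∈ s, a i = b i := by
  have key : ∑ i ∈ s, (a i * log (a i / b i) - a i + b i) = 0 := by
    rw [Finset.sum_add_distrib, Finset.sum_sub_distrib, hkl, hsum]; ring
  have hnn : ∀ i ∈ s, 0 ≤ a i * log (a i / b i) - a i + b i := by
    intro i hi
    have := term_nonneg (ha i hi) (hb i hi) (hab i hi)
    linarith
  have := (Finset.sum_eq_zero_iff_of_nonneg hnn).mp key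
  intro i hi
  exact term_eq (ha i hi) (hb i hi) (hab i hi) (by have := this i hi; linarith)

/-- Log-sum inequality. -/
lemma log_sum_ineq {ι : Type*} (s : Finset ι) (a b : ι → ℝ)
    (ha : ∀ i ∈ s, 0 ≤ a i) (hb : ∀ i ∈ s, 0 ≤ b i)
    (hab : ∀ i ∈ s, 0 < a i → 0 < b i) :
    (∑ i ∈ s, a i) * log ((∑ i ∈ s, a i) / (∑ i ∈ s, b i)) ≤
      ∑ i ∈ s, a i * log (a i / b i) := by
  set A := ∑ i ∈ s, a i with hA
  set B := ∑ i ∈ s, b i with hB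
  rcases eq_or_lt_of_le (Finset.sum_nonneg ha) with h0 | h0
  · have : ∀ i ∈ s, a i = 0 := by
      intro i hi
      have := (Finset.sum_eq_zero_iff_of_nonneg ha).mp h0.symm i hi
      exact this
    rw [← hA] at h0
    rw [← h0]
    simp only [zero_mul]
    apply Finset.sum_nonneg
    intro i hi; rw [this i hi]; simp
  · -- A > 0; find i with a i > 0, so B > 0
    have hBpos : 0 < B := by
      obtain ⟨i, hi, hai⟩ : ∃ i ∈ s, 0 < a i := by
        by_contra hc
        push_neg at hc
        have : A ≤ 0 := Finset.sum_nonpos hc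
        linarith
      exact lt_of_lt_of_le (hab i hi hai)
        (Finset.single_le_sum hb hi)
    have key : ∀ i ∈ s, a i * log (A / B) + (a i - b i * (A / B)) ≤ a i * log (a i / b i) := by
      intro i hi
      rcases eq_or_lt_of_le (ha i hi) with hz | hz
      · rw [← hz]
        have : 0 ≤ b i * (A/B) := by
          have := hb i hi; positivity
        simp; linarith
      · have hbi := hab i hi hz
        have h1 : log (b i * A / (a i * B)) ≤ b i * A / (a i * B) - 1 :=
          Real.log_le_sub_one_of_pos (by positivity)
        have h2 : log (a i / b i) = log (a i * B / (b i * A)) + log (A / B) := by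
          rw [← Real.log_mul (by positivity) (by positivity)]
          congr 1; field_simp; exact (mul_inv_cancel₀ h0.ne').symm
        have h3 : log (a i * B / (b i * A)) = - log (b i * A / (a i * B)) := by
          rw [Real.log_div (by positivity) (by positivity),
            Real.log_div (by positivity) (by positivity)]
          ring
        rw [h2, h3, mul_add]
        have h4 : a i * (b i * A / (a i * B) - 1) = b i * (A/B) - a i := by
          field_simp
        nlinarith [mul_le_mul_of_nonneg_left h1 hz.le]
    calc A * log (A / B) = ∑ i ∈ s, (a i * log (A / B) + (a i - b i * (A / B))) := by
          rw [Finset.sum_add_distrib, Finset.sum_sub_distrib, ← Finset.sum_mul, ← hA,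
            ← Finset.sum_mul, ← hB]
          field_simp; ring
      _ ≤ ∑ i ∈ s, a i * log (a i / b i) := Finset.sum_le_sum key

section Aux
open scoped Classical

/-- `I(X; h(X)) = H(h(X))` for a deterministic statistic. -/
lemma ITX_eq_HT {T : Type*} (q : X → Y → ℝ) (hq : ∀ x y, 0 ≤ q x y) (h : X → T) :
    ITX q h = HT q h := by
  have hpX2 : ∀ x, 0 ≤ pX2 q x := fun x => Finset.sum_nonneg fun y _ => hq x y
  have hle : ∀ x t, h x = t → pX2 q x ≤ pT q h t := by
    intro x t hxt
    have := Finset.single_le_sum (f := fun x' => if h x' = t then pX2 q x' else 0)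
      (fun x' _ => by by_cases h' : h x' = t <;> simp [h', hpX2 x'])
      (Finset.mem_univ x)
    simpa [pT, hxt] using this
  have key : ∀ x t, t ∈ supp h →
      (if h x = t then pX2 q x else 0) *
        log ((if h x = t then pX2 q x else 0) / (pX2 q x * pT q h t)) =
      -((if h x = t then pX2 q x else 0) * log (pT q h t)) := by
    intro x t _
    by_cases hxt : h x = t
    · rw [if_pos hxt]
      rcases eq_or_lt_of_le (hpX2 x) with h0 | h0
      · rw [← h0]; ring
      · have hT : 0 < pT q h t := lt_of_lt_of_le h0 (hle x t hxt)
        have h1 := h0.ne'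
        have h2 := hT.ne'
        have hrw : pX2 q x / (pX2 q x * pT q h t) = 1 / pT q h t := by
          field_simp
        rw [hrw, one_div, Real.log_inv]; ring
    · rw [if_neg hxt]; ring
  rw [ITX, HT]
  rw [Finset.sum_congr rfl fun x _ => Finset.sum_congr rfl fun t ht => key x t ht]
  rw [Finset.sum_comm]
  have tcongr : ∀ t ∈ supp h,
      (∑ x : X, -((if h x = t then pX2 q x else 0) * log (pT q h t)))
        = -(pT q h t * log (pT q h t)) := by
    intro t _
    rw [Finset.sum_neg_distrib, ← Finset.sum_mul]
    simp only [pT]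
  rw [Finset.sum_congr rfl tcongr, Finset.sum_neg_distrib]

end Aux

section Main

variable (p : X → Y → W → ℝ)

lemma pXY_nonneg (hp : IsJoint p) (x : X) (y : Y) : 0 ≤ pXY p x y :=
  Finset.sum_nonneg fun w _ => hp.1 x y w
lemma pX_nonneg (hp : IsJoint p) (x : X) : 0 ≤ pX p x :=
  Finset.sum_nonneg fun y _ => Finset.sum_nonneg fun w _ => hp.1 x y w
lemma pW_nonneg (hp : IsJoint p) (w : W) : 0 ≤ pW p w :=
  Finset.sum_nonneg fun x _ => Finset.sum_nonneg fun y _ => hp.1 x y w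
lemma pXW_nonneg (hp : IsJoint p) (x : X) (w : W) : 0 ≤ pXW p x w :=
  Finset.sum_nonneg fun y _ => hp.1 x y w
lemma pYW_nonneg (hp : IsJoint p) (y : Y) (w : W) : 0 ≤ pYW p y w :=
  Finset.sum_nonneg fun x _ => hp.1 x y w

lemma p_le_pXY (hp : IsJoint p) (x : X) (y : Y) (w : W) : p x y w ≤ pXY p x y :=
  Finset.single_le_sum (fun w' _ => hp.1 x y w') (Finset.mem_univ w)
lemma p_le_pXW (hp : IsJoint p) (x : X) (y : Y) (w : W) : p x y w ≤ pXW p x w :=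
  Finset.single_le_sum (fun y' _ => hp.1 x y' w) (Finset.mem_univ y)
lemma p_le_pYW (hp : IsJoint p) (x : X) (y : Y) (w : W) : p x y w ≤ pYW p y w :=
  Finset.single_le_sum (fun x' _ => hp.1 x' y w) (Finset.mem_univ x)

lemma pX_eq_sum_pXW (x : X) : pX p x = ∑ w, pXW p x w := Finset.sum_comm
lemma pW_eq_sum_pXW (w : W) : pW p w = ∑ x, pXW p x w := rfl
lemma pW_eq_sum_pYW (w : W) : pW p w = ∑ y, pYW p y w := Finset.sum_comm
lemma pX_eq_sum_pXY (x : X) : pX p x = ∑ y, pXY p x y := rfl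

lemma pXY_le_pX (hp : IsJoint p) (x : X) (y : Y) : pXY p x y ≤ pX p x := by
  rw [pX_eq_sum_pXY]
  exact Finset.single_le_sum (fun y' _ => pXY_nonneg p hp x y') (Finset.mem_univ y)
lemma pXW_le_pX (hp : IsJoint p) (x : X) (w : W) : pXW p x w ≤ pX p x := by
  rw [pX_eq_sum_pXW]
  exact Finset.single_le_sum (fun w' _ => pXW_nonneg p hp x w') (Finset.mem_univ w)
lemma pXW_le_pW (hp : IsJoint p) (x : X) (w : W) : pXW p x w ≤ pW p w := by
  rw [pW_eq_sum_pXW]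
  exact Finset.single_le_sum (fun x' _ => pXW_nonneg p hp x' w) (Finset.mem_univ x)
lemma pYW_le_pW (hp : IsJoint p) (y : Y) (w : W) : pYW p y w ≤ pW p w := by
  rw [pW_eq_sum_pYW]
  exact Finset.single_le_sum (fun y' _ => pYW_nonneg p hp y' w) (Finset.mem_univ y)

lemma sum_pW (hp : IsJoint p) : ∑ w, pW p w = 1 := by
  calc ∑ w, pW p w = ∑ w, ∑ x, ∑ y, p x y w := rfl
    _ = ∑ x, ∑ w, ∑ y, p x y w := Finset.sum_comm
    _ = ∑ x, ∑ y, ∑ w, p x y w := Finset.sum_congr rfl fun x _ => Finset.sum_comm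
    _ = 1 := hp.2

/-- The Markov property as a pointwise product identity. -/
lemma markov_pointwise (hp : IsJoint p) (hm : Markov p) (x : X) (y : Y) (w : W) :
    p x y w * pX p x = pXY p x y * pXW p x w := by
  rcases eq_or_lt_of_le (pXY_nonneg p hp x y) with h0 | h0
  · have hz : p x y w = 0 :=
      le_antisymm (le_trans (p_le_pXY p hp x y w) (le_of_eq h0.symm)) (hp.1 x y w)
    rw [hz, ← h0]; ring
  · have hx : 0 < pX p x := lt_of_lt_of_le h0 (pXY_le_pX p hp x y)
    have := hm x y w h0
    field_simp at this
    linarith [this]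

/-- `I(X;Y|W) = 0` gives pointwise conditional independence. -/
lemma suff_pointwise (hp : IsJoint p) (hsuff : IXYgW p = 0) (x : X) (y : Y) (w : W) :
    p x y w * pW p w = pXW p x w * pYW p y w := by
  have key := gibbs_eq (Finset.univ : Finset (X × Y × W))
    (fun z => p z.1 z.2.1 z.2.2)
    (fun z => pXW p z.1 z.2.2 * pYW p z.2.1 z.2.2 / pW p z.2.2)
    (fun z _ => hp.1 z.1 z.2.1 z.2.2)
    (fun z _ => div_nonneg (mul_nonneg (pXW_nonneg p hp _ _) (pYW_nonneg p hp _ _))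
      (pW_nonneg p hp _))
    (fun z _ hz => by
      have h1 : 0 < pXW p z.1 z.2.2 := lt_of_lt_of_le hz (p_le_pXW p hp _ _ _)
      have h2 : 0 < pYW p z.2.1 z.2.2 := lt_of_lt_of_le hz (p_le_pYW p hp _ _ _)
      have h3 : 0 < pW p z.2.2 := lt_of_lt_of_le h1 (pXW_le_pW p hp _ _)
      positivity)
    ?_ ?_
  · have := key (x, y, w) (Finset.mem_univ _)
    simp only at this
    rcases eq_or_lt_of_le (pW_nonneg p hp w) with hw0 | hw0
    · have : pXW p x w = 0 :=
        le_antisymm (by rw [hw0]; exact pXW_le_pW p hp x w) (pXW_nonneg p hp x w)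
      have hz : p x y w = 0 := le_antisymm
        (le_trans (p_le_pXW p hp x y w) this.le) (hp.1 x y w)
      rw [hz, this]; ring
    · rw [this]
      field_simp
  · -- sums agree
    have hsa : ∑ z : X × Y × W, p z.1 z.2.1 z.2.2 = 1 := by
      rw [Fintype.sum_prod_type, ← hp.2]
      exact Finset.sum_congr rfl fun x _ => by rw [Fintype.sum_prod_type]
    have hsb : ∑ z : X × Y × W,
        pXW p z.1 z.2.2 * pYW p z.2.1 z.2.2 / pW p z.2.2 = 1 := by
      rw [Fintype.sum_prod_type]
      have e1 : ∀ x : X, (∑ z : Y × W, pXW p x z.2 * pYW p z.1 z.2 / pW p z.2)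
          = ∑ y, ∑ w, pXW p x w * pYW p y w / pW p w :=
        fun x => by rw [Fintype.sum_prod_type]
      rw [Finset.sum_congr rfl fun x _ => e1 x]
      rw [Finset.sum_comm]
      rw [Finset.sum_congr rfl fun y (_ : y ∈ Finset.univ) => Finset.sum_comm
        (f := fun (x : X) (w : W) => pXW p x w * pYW p y w / pW p w)]
      rw [Finset.sum_comm]
      have e2 : ∀ w, (∑ y, ∑ x, pXW p x w * pYW p y w / pW p w) = pW p w := by
        intro w
        rcases eq_or_lt_of_le (pW_nonneg p hp w) with h0 | h0
        · rw [← h0]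
          apply Finset.sum_eq_zero
          intro y _
          apply Finset.sum_eq_zero
          intro x _
          have : pXW p x w = 0 := le_antisymm
            (le_trans (pXW_le_pW p hp x w) (le_of_eq h0.symm)) (pXW_nonneg p hp x w)
          rw [this]; ring
        · have : (∑ y, ∑ x, pXW p x w * pYW p y w / pW p w)
              = ((∑ y, pYW p y w) * (∑ x, pXW p x w)) / pW p w := by
            rw [Finset.sum_mul_sum, Finset.sum_div]
            apply Finset.sum_congr rfl
            intro y _
            rw [Finset.sum_div]
            apply Finset.sum_congr rfl
            intro x _
            ring
          rw [this, ← pW_eq_sum_pXW, ← pW_eq_sum_pYW, mul_div_assoc, div_self h0.ne', mul_one]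
      rw [Finset.sum_congr rfl fun w _ => e2 w]
      exact sum_pW p hp
    rw [hsa, hsb]
  · -- KL sum is zero
    rw [← hsuff, IXYgW, Fintype.sum_prod_type]
    apply Finset.sum_congr rfl; intro x _
    rw [Fintype.sum_prod_type]
    apply Finset.sum_congr rfl; intro y _
    apply Finset.sum_congr rfl; intro w _
    rw [div_div_eq_mul_div]

lemma fstar_const (hp : IsJoint p) (hm : Markov p) (hsuff : IXYgW p = 0)
    (x : X) (w : W) (hx : 0 < pXW p x w) (y : Y) :
    pXY p x y / pX p x = pYW p y w / pW p w := by
  have hX : 0 < pX p x := lt_of_lt_of_le hx (pXW_le_pX p hp x w)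
  have hW : 0 < pW p w := lt_of_lt_of_le hx (pXW_le_pW p hp x w)
  have hM := markov_pointwise p hp hm x y w
  have hS := suff_pointwise p hp hsuff x y w
  have e : pXW p x w * (pXY p x y * pW p w) = pXW p x w * (pYW p y w * pX p x) := by
    linear_combination pX p x * hS - pW p w * hM
  have e2 := mul_left_cancel₀ hx.ne' e
  rw [div_eq_div_iff hX.ne' hW.ne']
  linarith


end Main

/-- if `Y – X – W` is a Markov chain and `I(X;Y|W) = 0`, then
`I(X;W) ≥ H(W*)` where `W* = p(Y|X)` is the minimal sufficient statistic;
moreover `I(X;W*) = H(W*)`. -/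
theorem sufficient_encoders_rate_bound
    (p : X → Y → W → ℝ) (hp : IsJoint p) (hm : Markov p) (hsuff : IXYgW p = 0) :
    HT (fun x y => pXY p x y) (fstar (fun x y => pXY p x y)) ≤ IXW p ∧
    ITX (fun x y => pXY p x y) (fstar (fun x y => pXY p x y)) =
      HT (fun x y => pXY p x y) (fstar (fun x y => pXY p x y)) := by
  classical
  set q : X → Y → ℝ := fun x y => pXY p x y with hq
  set h : X → (Y → ℝ) := fstar q with hh
  have hqnn : ∀ x y, 0 ≤ q x y := fun x y => pXY_nonneg p hp x y
  have hmem : ∀ x : X, h x ∈ supp h := fun x => by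
    simp only [supp, Finset.mem_image]
    exact ⟨x, Finset.mem_univ x, rfl⟩
  have hpT : ∀ t, pT q h t = ∑ x ∈ Finset.univ.filter (fun x => h x = t), pX p x := by
    intro t
    rw [pT, Finset.sum_filter]
    refine Finset.sum_congr rfl fun x _ => ?_
    by_cases hx : h x = t
    · rw [if_pos hx, if_pos hx]; rfl
    · rw [if_neg hx, if_neg hx]
  have hC : ∀ x x' w, 0 < pXW p x w → 0 < pXW p x' w → h x = h x' := by
    intro x x' w hx hx'
    have key : ∀ x0, 0 < pXW p x0 w → h x0 = fun y => pYW p y w / pW p w := by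
      intro x0 h0
      funext y
      show condYX2 q x0 y = pYW p y w / pW p w
      have e : condYX2 q x0 y = pXY p x0 y / pX p x0 := rfl
      rw [e, fstar_const p hp hm hsuff x0 w h0 y]
    rw [key x hx, key x' hx']
  set P : (Y → ℝ) → W → ℝ :=
    fun t w => ∑ x ∈ Finset.univ.filter (fun x => h x = t), pXW p x w with hP
  have hIXW : IXW p = ∑ w, ∑ x, pXW p x w * log (pXW p x w / (pX p x * pW p w)) :=
    Finset.sum_comm
  have stepA : (∑ w, ∑ t ∈ supp h, P t w * log (P t w / (pT q h t * pW p w))) ≤ IXW p := by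
    rw [hIXW]
    apply Finset.sum_le_sum
    intro w _
    rw [← Finset.sum_fiberwise_of_maps_to (fun x (_ : x ∈ Finset.univ) => hmem x)
      (fun x => pXW p x w * log (pXW p x w / (pX p x * pW p w)))]
    apply Finset.sum_le_sum
    intro t _
    have hls := log_sum_ineq (Finset.univ.filter (fun x => h x = t))
      (fun x => pXW p x w) (fun x => pX p x * pW p w)
      (fun x _ => pXW_nonneg p hp x w)
      (fun x _ => mul_nonneg (pX_nonneg p hp x) (pW_nonneg p hp w))
      (fun x _ hx => mul_pos (lt_of_lt_of_le hx (pXW_le_pX p hp x w))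
        (lt_of_lt_of_le hx (pXW_le_pW p hp x w)))
    have hbsum : (∑ x ∈ Finset.univ.filter (fun x => h x = t), pX p x * pW p w)
        = pT q h t * pW p w := by rw [← Finset.sum_mul, ← hpT]
    rw [hbsum] at hls
    exact hls
  have stepB : (∑ w, ∑ t ∈ supp h, P t w * log (P t w / (pT q h t * pW p w))) = HT q h := by
    have hPlog : ∀ w, ∀ t ∈ supp h, P t w * log (P t w / (pT q h t * pW p w))
        = -(P t w * log (pT q h t)) := by
      intro w t _
      have hPnn : 0 ≤ P t w := Finset.sum_nonneg fun x _ => pXW_nonneg p hp x w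
      rcases eq_or_lt_of_le hPnn with h0 | h0
      · rw [← h0]; ring
      · obtain ⟨x, hxf, hxp⟩ :
            ∃ x ∈ Finset.univ.filter (fun x => h x = t), 0 < pXW p x w := by
          by_contra hc
          push_neg at hc
          have : P t w ≤ 0 := Finset.sum_nonpos hc
          linarith
        have hW : 0 < pW p w := lt_of_lt_of_le hxp (pXW_le_pW p hp x w)
        have hTt : 0 < pT q h t := by
          rw [hpT]
          exact lt_of_lt_of_le (lt_of_lt_of_le hxp (pXW_le_pX p hp x w))
            (Finset.single_le_sum (fun x' _ => pX_nonneg p hp x') hxf)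
        have hxt : h x = t := (Finset.mem_filter.mp hxf).2
        have hPw : P t w = pW p w := by
          rw [pW_eq_sum_pXW]
          refine Finset.sum_subset (Finset.filter_subset _ _) ?_
          intro x' _ hx'
          rcases eq_or_lt_of_le (pXW_nonneg p hp x' w) with hz | hz
          · exact hz.symm
          · exact absurd (Finset.mem_filter.mpr
              ⟨Finset.mem_univ x', (hC x' x w hz hxp).trans hxt⟩) hx'
        rw [hPw]
        have hrw : pW p w / (pT q h t * pW p w) = 1 / pT q h t := by
          rw [mul_comm, div_mul_eq_div_div, div_self hW.ne']
        rw [hrw, one_div, Real.log_inv]; ring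
    rw [Finset.sum_congr rfl fun w (_ : w ∈ Finset.univ) =>
      Finset.sum_congr rfl (hPlog w)]
    rw [Finset.sum_comm]
    have hPsum : ∀ t, ∑ w, P t w = pT q h t := by
      intro t
      calc ∑ w, P t w
          = ∑ x ∈ Finset.univ.filter (fun x => h x = t), ∑ w, pXW p x w :=
            Finset.sum_comm
        _ = ∑ x ∈ Finset.univ.filter (fun x => h x = t), pX p x :=
            Finset.sum_congr rfl fun x _ => (pX_eq_sum_pXW p x).symm
        _ = pT q h t := (hpT t).symm
    have tstep : ∀ t ∈ supp h, (∑ w, -(P t w * log (pT q h t)))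
        = -(pT q h t * log (pT q h t)) := by
      intro t _
      rw [Finset.sum_neg_distrib, ← Finset.sum_mul, hPsum]
    rw [Finset.sum_congr rfl tstep, Finset.sum_neg_distrib, HT]
  exact ⟨le_trans (le_of_eq stepB.symm) stepA, ITX_eq_HT q hqnn h⟩
end
end

section
/- Let W* be a deterministic function of X that is sufficient for Y (I(X;Y|W*)=0), and let W = (W*, g(X)) for any function g. Then Y – X – W is a Markov chain, I(W;Y) = I(X;Y), and H(W*) ≤ I(X;W) ≤ H(X); taking g(X)=X achieves I(X;W)=H(X). Hence the IB curve is flat at I(X;Y) for rates in [H(W*), H(X)]. -/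
open Real Finset

noncomputable section

variable {X Y W : Type*} [Fintype X] [Fintype Y] [Fintype W]

open scoped Classical

/-- Mutual information `I(X;Y)` of a pair joint pmf. -/
def IXY2 (q : X → Y → ℝ) : ℝ :=
  ∑ x, ∑ y, q x y * log (q x y / ((∑ y', q x y') * (∑ x', q x' y)))

/-- Entropy `H(X)` of a pair joint pmf. -/
def HX2 (q : X → Y → ℝ) : ℝ :=
  -∑ x, (∑ y, q x y) * log (∑ y, q x y)

/-- Law of a deterministic statistic `h(X)`. -/
def pT2 {T : Type*} [Fintype T] (q : X → Y → ℝ) (h : X → T) (t : T) : ℝ :=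
  ∑ x, if h x = t then (∑ y, q x y) else 0

/-- Entropy `H(h(X))`. -/
def HT2 {T : Type*} [Fintype T] (q : X → Y → ℝ) (h : X → T) : ℝ :=
  -∑ t, pT2 q h t * log (pT2 q h t)

/-- The joint law of `(X, Y, h(X))` for a deterministic statistic `h`. -/
def jointD {T : Type*} [Fintype T] (q : X → Y → ℝ) (h : X → T) :
    X → Y → T → ℝ := fun x y t => if h x = t then q x y else 0


lemma gibbs_eq_s17 {ι : Type*} [Fintype ι] (a c : ι → ℝ) (ha : ∀ i, 0 ≤ a i)
    (hc : ∀ i, 0 ≤ c i) (hs : ∑ i, a i = ∑ i, c i)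
    (hpos : ∀ i, 0 < a i → 0 < c i)
    (hzero : ∑ i, a i * Real.log (a i / c i) = 0) : ∀ i, a i = c i := by
  have key : ∀ i, a i - c i ≤ a i * Real.log (a i / c i) := by
    intro i
    rcases eq_or_lt_of_le (ha i) with h0 | h0
    · simp [← h0]
      exact hc i
    · have hci := hpos i h0
      have h1 : Real.log (c i / a i) ≤ c i / a i - 1 :=
        Real.log_le_sub_one_of_pos (div_pos hci h0)
      have h2 : Real.log (c i / a i) = - Real.log (a i / c i) := by
        rw [← Real.log_inv, inv_div]
      nlinarith [mul_le_mul_of_nonneg_left h1 (le_of_lt h0),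
        mul_div_cancel₀ (c i) (ne_of_gt h0)]
  have hsum0 : ∑ i, (a i * Real.log (a i / c i) - (a i - c i)) = 0 := by
    rw [Finset.sum_sub_distrib, hzero, Finset.sum_sub_distrib, hs]; ring
  have heach : ∀ i ∈ Finset.univ, a i * Real.log (a i / c i) - (a i - c i) = 0 := by
    apply (Finset.sum_eq_zero_iff_of_nonneg _).mp hsum0
    intro i _
    linarith [key i]
  intro i
  have hi := heach i (Finset.mem_univ i)
  rcases eq_or_lt_of_le (ha i) with h0 | h0
  · -- a i = 0, then c i = 0 from hi
    rw [← h0] at hi ⊢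
    simp at hi
    linarith
  · have hci := hpos i h0
    by_contra hne
    have h2 : Real.log (c i / a i) = - Real.log (a i / c i) := by
      rw [← Real.log_inv, inv_div]
    have hne' : c i / a i ≠ 1 := by
      intro h; apply hne
      field_simp at h; linarith
    have h1 : Real.log (c i / a i) < c i / a i - 1 :=
      Real.log_lt_sub_one_of_pos (div_pos hci h0) hne'
    have := mul_lt_mul_of_pos_left h1 h0
    rw [h2] at this
    have h3 : a i * (c i / a i - 1) = c i - a i := by field_simp
    nlinarith
section helpers
set_option linter.unusedSectionVars false
variable {X Y : Type*} [Fintype X] [Fintype Y] {T : Type*} [Fintype T]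

lemma pXY_jointD (q : X → Y → ℝ) (h : X → T) (x : X) (y : Y) :
    pXY (jointD q h) x y = q x y := by
  simp [pXY, jointD]

lemma pX_jointD (q : X → Y → ℝ) (h : X → T) (x : X) :
    pX (jointD q h) x = ∑ y, q x y := by
  simp [pX, jointD]

lemma pXW_jointD (q : X → Y → ℝ) (h : X → T) (x : X) (t : T) :
    pXW (jointD q h) x t = if h x = t then ∑ y, q x y else 0 := by
  unfold pXW jointD
  split <;> simp

lemma pYW_jointD (q : X → Y → ℝ) (h : X → T) (y : Y) (t : T) :
    pYW (jointD q h) y t = ∑ x, if h x = t then q x y else 0 := rfl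

lemma pW_jointD (q : X → Y → ℝ) (h : X → T) (t : T) :
    pW (jointD q h) t = pT2 q h t := by
  unfold pW jointD pT2
  refine Finset.sum_congr rfl fun x _ => ?_
  split <;> simp

lemma pY_jointD (q : X → Y → ℝ) (h : X → T) (y : Y) :
    pY (jointD q h) y = ∑ x, q x y := by
  simp [pY, jointD]

lemma sum_pXW (p : X → Y → T → ℝ) (t : T) : ∑ x, pXW p x t = pW p t := rfl

lemma sum_pYW (p : X → Y → T → ℝ) (t : T) : ∑ y, pYW p y t = pW p t := by
  unfold pYW pW; exact Finset.sum_comm.symm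

/-- Grouping a sum over `X` by the value of `h`. -/
lemma group_sum (h : X → T) (c : X → ℝ) (G : T → ℝ) :
    ∑ t, (∑ x, if h x = t then c x else 0) * G t = ∑ x, c x * G (h x) := by
  have : ∀ t, (∑ x, if h x = t then c x else 0) * G t
      = ∑ x, if h x = t then c x * G t else 0 := by
    intro t
    rw [Finset.sum_mul]
    exact Finset.sum_congr rfl fun x _ => by split <;> simp
  simp_rw [this]
  rw [Finset.sum_comm]
  exact Finset.sum_congr rfl fun x _ => by simp

end helpers
section suff
set_option linter.unusedSectionVars false
variable {X Y : Type*} [Fintype X] [Fintype Y] {T : Type*} [Fintype T]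

lemma jointD_nonneg (q : X → Y → ℝ) (hq0 : ∀ x y, 0 ≤ q x y) (h : X → T) :
    ∀ x y t, 0 ≤ jointD q h x y t := by
  intro x y t; unfold jointD; split
  · exact hq0 x y
  · exact le_rfl

lemma pXW_nonneg_s17 (p : X → Y → T → ℝ) (hp0 : ∀ x y t, 0 ≤ p x y t) (x : X) (t : T) :
    0 ≤ pXW p x t := Finset.sum_nonneg fun y _ => hp0 x y t

lemma pYW_nonneg_s17 (p : X → Y → T → ℝ) (hp0 : ∀ x y t, 0 ≤ p x y t) (y : Y) (t : T) :
    0 ≤ pYW p y t := Finset.sum_nonneg fun x _ => hp0 x y t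

lemma pW_nonneg_s17 (p : X → Y → T → ℝ) (hp0 : ∀ x y t, 0 ≤ p x y t) (t : T) :
    0 ≤ pW p t := Finset.sum_nonneg fun x _ => pXW_nonneg_s17 p hp0 x t

lemma le_pXW (p : X → Y → T → ℝ) (hp0 : ∀ x y t, 0 ≤ p x y t) (x : X) (y : Y) (t : T) :
    p x y t ≤ pXW p x t :=
  Finset.single_le_sum (fun y' _ => hp0 x y' t) (Finset.mem_univ y)

lemma le_pYW (p : X → Y → T → ℝ) (hp0 : ∀ x y t, 0 ≤ p x y t) (x : X) (y : Y) (t : T) :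
    p x y t ≤ pYW p y t :=
  Finset.single_le_sum (fun x' _ => hp0 x' y t) (Finset.mem_univ x)

lemma pXW_le_pW_s17 (p : X → Y → T → ℝ) (hp0 : ∀ x y t, 0 ≤ p x y t) (x : X) (t : T) :
    pXW p x t ≤ pW p t :=
  Finset.single_le_sum (fun x' _ => pXW_nonneg_s17 p hp0 x' t) (Finset.mem_univ x)

lemma pW_total (q : X → Y → ℝ) (hq1 : ∑ x, ∑ y, q x y = 1) (h : X → T) :
    ∑ t, pW (jointD q h) t = 1 := by
  unfold pW
  rw [Finset.sum_comm]
  have : ∀ x, ∑ t, ∑ y, jointD q h x y t = ∑ y, q x y := by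
    intro x
    rw [Finset.sum_comm]
    refine Finset.sum_congr rfl fun y _ => ?_
    simp [jointD]
  simp_rw [this]
  exact hq1

/-- From `I(X;Y|W*) = 0` for `W* = f(X)`, the pointwise factorization. -/
lemma suff_key (q : X → Y → ℝ) (hq0 : ∀ x y, 0 ≤ q x y)
    (hq1 : ∑ x, ∑ y, q x y = 1) (f : X → T)
    (hsuff : IXYgW (jointD q f) = 0) (x : X) (y : Y) :
    q x y * pT2 q f (f x) = (∑ y', q x y') * pYW (jointD q f) y (f x) := by
  classical
  set p := jointD q f with hp
  have hp0 : ∀ x y t, 0 ≤ p x y t := jointD_nonneg q hq0 f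
  set a : X × Y × T → ℝ := fun i => p i.1 i.2.1 i.2.2 with hadef
  set c : X × Y × T → ℝ := fun i =>
    if pW p i.2.2 = 0 then 0 else pXW p i.1 i.2.2 * pYW p i.2.1 i.2.2 / pW p i.2.2
    with hcdef
  have hcpos : ∀ i, 0 < a i → 0 < c i := by
    rintro ⟨x', y', t'⟩ hai
    simp only [hadef] at hai
    have h1 : 0 < pXW p x' t' := lt_of_lt_of_le hai (le_pXW p hp0 x' y' t')
    have h2 : 0 < pYW p y' t' := lt_of_lt_of_le hai (le_pYW p hp0 x' y' t')
    have h3 : 0 < pW p t' := lt_of_lt_of_le h1 (pXW_le_pW_s17 p hp0 x' t')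
    simp only [hcdef]
    rw [if_neg (ne_of_gt h3)]
    positivity
  have hsa : ∑ i, a i = 1 := by
    rw [Fintype.sum_prod_type]
    simp_rw [Fintype.sum_prod_type]
    have : ∀ x y, ∑ t, p x y t = q x y := by
      intro x y; simp [hp, jointD]
    simp only [hadef, this]
    exact hq1
  have hsc : ∑ i, c i = 1 := by
    rw [Fintype.sum_prod_type]
    simp_rw [Fintype.sum_prod_type]
    have e1 : ∀ x, ∑ y, ∑ t, c (x, y, t) = ∑ t, ∑ y, c (x, y, t) :=
      fun x => Finset.sum_comm
    simp_rw [e1]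
    rw [Finset.sum_comm]
    have : ∀ t, ∑ x, ∑ y, c (x, y, t) = pW p t := by
      intro t
      by_cases hW : pW p t = 0
      · simp only [hcdef, hW, if_pos rfl]
        simp [hW]
      · simp only [hcdef, if_neg hW]
        have : ∀ x, ∑ y, pXW p x t * pYW p y t / pW p t
            = pXW p x t * pW p t / pW p t := by
          intro x
          rw [← sum_pYW p t, Finset.mul_sum, Finset.sum_div]
        simp_rw [this, mul_div_assoc, ← Finset.sum_mul, sum_pXW]
        field_simp
    simp_rw [this]
    exact pW_total q hq1 f
  have hzero : ∑ i, a i * Real.log (a i / c i) = 0 := by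
    rw [← hsuff]
    unfold IXYgW
    rw [Fintype.sum_prod_type]
    simp_rw [Fintype.sum_prod_type]
    refine Finset.sum_congr rfl fun x' _ => Finset.sum_congr rfl fun y' _ =>
      Finset.sum_congr rfl fun t' _ => ?_
    rcases eq_or_lt_of_le (hp0 x' y' t') with h0 | h0
    · simp only [hadef, ← h0]
      simp
    · have h1 : 0 < pXW p x' t' := lt_of_lt_of_le h0 (le_pXW p hp0 x' y' t')
      have h2 : 0 < pYW p y' t' := lt_of_lt_of_le h0 (le_pYW p hp0 x' y' t')
      have h3 : 0 < pW p t' := lt_of_lt_of_le h1 (pXW_le_pW_s17 p hp0 x' t')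
      simp only [hadef, hcdef, if_neg (ne_of_gt h3)]
      rw [div_div_eq_mul_div]
  have key := gibbs_eq_s17 a c (fun i => hp0 i.1 i.2.1 i.2.2)
    (by rintro ⟨x', y', t'⟩
        simp only [hcdef]
        split
        · exact le_rfl
        · have h3 : 0 ≤ pW p t' := pW_nonneg_s17 p hp0 t'
          have := pXW_nonneg_s17 p hp0 x' t'
          have := pYW_nonneg_s17 p hp0 y' t'
          positivity)
    (hsa.trans hsc.symm) hcpos hzero (x, y, f x)
  simp only [hadef, hcdef] at key
  have hax : p x y (f x) = q x y := by simp [hp, jointD]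
  have hXW : pXW p x (f x) = ∑ y', q x y' := by
    rw [hp, pXW_jointD, if_pos rfl]
  have hWr : pW p (f x) = pT2 q f (f x) := pW_jointD q f (f x)
  rw [hax, hXW, hWr] at key
  by_cases hr : pT2 q f (f x) = 0
  · rw [if_pos hr] at key
    have hqx : (∑ y', q x y') = 0 := by
      have h0 : ∀ x' ∈ Finset.univ, (0:ℝ) ≤ if f x' = f x then ∑ y', q x' y' else 0 := by
        intro x' _
        split
        · exact Finset.sum_nonneg fun y' _ => hq0 x' y'
        · exact le_rfl
      have hterms := (Finset.sum_eq_zero_iff_of_nonneg h0).mp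
        (by simpa [pT2] using hr) x (Finset.mem_univ x)
      simpa using hterms
    rw [key, hr, hqx]
    ring
  · rw [if_neg hr] at key
    rw [key, div_mul_cancel₀ _ hr]
end suff
section main
set_option linter.unusedSectionVars false
variable {X Y : Type*} [Fintype X] [Fintype Y] {T : Type*} [Fintype T]

lemma pT2_nonneg (q : X → Y → ℝ) (hq0 : ∀ x y, 0 ≤ q x y) (h : X → T) (t : T) :
    0 ≤ pT2 q h t := by
  refine Finset.sum_nonneg fun x _ => ?_
  split
  · exact Finset.sum_nonneg fun y _ => hq0 x y
  · exact le_rfl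

lemma qX_le_pT2 (q : X → Y → ℝ) (hq0 : ∀ x y, 0 ≤ q x y) (h : X → T) (x : X) :
    (∑ y, q x y) ≤ pT2 q h (h x) := by
  have := Finset.single_le_sum (f := fun x' => if h x' = h x then (∑ y, q x' y) else 0)
    (fun x' _ => by
      split
      · exact Finset.sum_nonneg fun y _ => hq0 x' y
      · exact le_rfl) (Finset.mem_univ x)
  simpa [pT2] using this

/-- `I(X;W) = H(W)` when `W = h(X)` is deterministic. -/
lemma IXW_jointD (q : X → Y → ℝ) (hq0 : ∀ x y, 0 ≤ q x y) (h : X → T) :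
    IXW (jointD q h) = -∑ x, (∑ y, q x y) * Real.log (pT2 q h (h x)) := by
  unfold IXW
  rw [← Finset.sum_neg_distrib]
  refine Finset.sum_congr rfl fun x _ => ?_
  have hinner : ∀ w, pXW (jointD q h) x w *
      Real.log (pXW (jointD q h) x w / (pX (jointD q h) x * pW (jointD q h) w))
      = if h x = w then (∑ y, q x y) *
          Real.log ((∑ y, q x y) / ((∑ y, q x y) * pT2 q h w)) else 0 := by
    intro w
    rw [pXW_jointD, pX_jointD, pW_jointD]
    split
    · rfl
    · simp
  simp_rw [hinner]
  rw [Finset.sum_ite_eq]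
  simp only [Finset.mem_univ, if_true]
  rcases eq_or_lt_of_le (Finset.sum_nonneg fun y (_ : y ∈ Finset.univ) => hq0 x y) with h0 | h0
  · rw [← h0]; ring
  · have hB : 0 < pT2 q h (h x) := lt_of_lt_of_le h0 (qX_le_pT2 q hq0 h x)
    rw [div_mul_eq_div_div, div_self (ne_of_gt h0), one_div, Real.log_inv]
    ring

end main
section thm
set_option linter.unusedSectionVars false
variable {X Y : Type*} [Fintype X] [Fintype Y] {T : Type*} [Fintype T]

lemma group_pYW {T₁ T₂ : Type*} [Fintype T₁] [Fintype T₂] (q : X → Y → ℝ) (y : Y)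
    (f : X → T₁) (g : X → T₂) (G : T₁ → ℝ) :
    ∑ w : T₁ × T₂, pYW (jointD q (fun x => (f x, g x))) y w * G w.1
      = ∑ x, q x y * G (f x) := by
  simp only [pYW, jointD]
  simp_rw [Finset.sum_mul]
  rw [Finset.sum_comm]
  refine Finset.sum_congr rfl fun x _ => ?_
  rw [Fintype.sum_eq_single ((f x, g x) : _ × _)
    (fun w hne => by rw [if_neg (fun hE => hne hE.symm), zero_mul])]
  rw [if_pos rfl]

theorem flat_portion_of_IB_curve'
    {T₁ T₂ : Type*} [Fintype T₁] [Fintype T₂]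
    (q : X → Y → ℝ) (hq : (∀ x y, 0 ≤ q x y) ∧ ∑ x, ∑ y, q x y = 1)
    (f : X → T₁) (hsuff : IXYgW (jointD q f) = 0) (g : X → T₂) :
    Markov (jointD q (fun x => (f x, g x))) ∧
    IWY (jointD q (fun x => (f x, g x))) = IXY2 q ∧
    HT2 q f ≤ IXW (jointD q (fun x => (f x, g x))) ∧
    IXW (jointD q (fun x => (f x, g x))) ≤ HX2 q ∧
    IXW (jointD q (fun x => (f x, x))) = HX2 q := by
  classical
  obtain ⟨hq0, hq1⟩ := hq
  have hKey := suff_key q hq0 hq1 f hsuff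
  have hqX0 : ∀ x, 0 ≤ ∑ y, q x y := fun x => Finset.sum_nonneg fun y _ => hq0 x y
  have hq_le_qX : ∀ x y, q x y ≤ ∑ y', q x y' := fun x y =>
    Finset.single_le_sum (fun y' _ => hq0 x y') (Finset.mem_univ y)
  refine ⟨?_, ?_, ?_, ?_, ?_⟩
  · -- Markov
    intro x y w hpos
    rw [pXY_jointD] at hpos
    rw [pXY_jointD, pXW_jointD, pX_jointD]
    have hqx : 0 < ∑ y', q x y' := lt_of_lt_of_le hpos (hq_le_qX x y)
    simp only [jointD]
    by_cases hw : (f x, g x) = w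
    · rw [if_pos hw, if_pos hw, div_self (ne_of_gt hpos), div_self (ne_of_gt hqx)]
    · rw [if_neg hw, if_neg hw, zero_div, zero_div]
  · -- I(W;Y) = I(X;Y)
    have hstep1 : IXY2 q = ∑ x, ∑ y, q x y *
        Real.log (pYW (jointD q f) y (f x) / (pT2 q f (f x) * (∑ x', q x' y))) := by
      unfold IXY2
      refine Finset.sum_congr rfl fun x _ => Finset.sum_congr rfl fun y _ => ?_
      rcases eq_or_lt_of_le (hq0 x y) with h0 | h0
      · rw [← h0]; ring
      · have hqx : 0 < ∑ y', q x y' := lt_of_lt_of_le h0 (hq_le_qX x y)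
        have hr : 0 < pT2 q f (f x) := lt_of_lt_of_le hqx (qX_le_pT2 q hq0 f x)
        have hpy : 0 < ∑ x', q x' y := lt_of_lt_of_le h0
          (Finset.single_le_sum (fun x' _ => hq0 x' y) (Finset.mem_univ x))
        have harg : q x y / ((∑ y', q x y') * (∑ x', q x' y))
            = pYW (jointD q f) y (f x) / (pT2 q f (f x) * (∑ x', q x' y)) := by
          rw [div_eq_div_iff (ne_of_gt (mul_pos hqx hpy)) (ne_of_gt (mul_pos hr hpy))]
          linear_combination (∑ x', q x' y) * hKey x y
        rw [harg]
    have hstep2 : IXY2 q = ∑ y, ∑ w : T₁ × T₂,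
        pYW (jointD q (fun x => (f x, g x))) y w *
        Real.log (pYW (jointD q f) y w.1 / (pT2 q f w.1 * (∑ x', q x' y))) := by
      rw [hstep1, Finset.sum_comm]
      refine Finset.sum_congr rfl fun y _ => ?_
      exact (group_pYW q y f g
        (fun t => Real.log (pYW (jointD q f) y t / (pT2 q f t * (∑ x', q x' y))))).symm
    rw [hstep2]
    unfold IWY
    refine Finset.sum_congr rfl fun y _ => Finset.sum_congr rfl fun w _ => ?_
    rw [pY_jointD, pW_jointD]
    have hA0 : (0:ℝ) ≤ pYW (jointD q (fun x => (f x, g x))) y w :=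
      pYW_nonneg_s17 _ (jointD_nonneg q hq0 _) y w
    rcases eq_or_lt_of_le hA0 with h0 | h0
    · rw [← h0]; ring
    · have hx0 : ∃ x0, (f x0, g x0) = w ∧ 0 < q x0 y := by
        by_contra hcon
        push_neg at hcon
        have hle : pYW (jointD q (fun x => (f x, g x))) y w ≤ 0 := by
          simp only [pYW, jointD]
          refine Finset.sum_nonpos fun x _ => ?_
          split
          · next hx => exact hcon x hx
          · exact le_rfl
        linarith
      obtain ⟨x0, hx0w, hx0⟩ := hx0
      have hf0 : f x0 = w.1 := congrArg Prod.fst hx0w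
      have hpy : 0 < ∑ x', q x' y := lt_of_lt_of_le hx0
        (Finset.single_le_sum (fun x' _ => hq0 x' y) (Finset.mem_univ x0))
      have hr : 0 < pT2 q f w.1 := by
        rw [← hf0]
        exact lt_of_lt_of_le (lt_of_lt_of_le hx0 (hq_le_qX x0 y)) (qX_le_pT2 q hq0 f x0)
      have hAleB : pYW (jointD q (fun x => (f x, g x))) y w
          ≤ pT2 q (fun x => (f x, g x)) w := by
        simp only [pYW, jointD, pT2]
        refine Finset.sum_le_sum fun x _ => ?_
        by_cases hx : (f x, g x) = w
        · rw [if_pos hx, if_pos hx]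
          exact hq_le_qX x y
        · rw [if_neg hx, if_neg hx]
      have hB : 0 < pT2 q (fun x => (f x, g x)) w := lt_of_lt_of_le h0 hAleB
      have hABrs : pYW (jointD q (fun x => (f x, g x))) y w * pT2 q f w.1
          = pT2 q (fun x => (f x, g x)) w * pYW (jointD q f) y w.1 := by
        have hKey' := fun x' => hKey x' y
        simp only [pYW, jointD, pT2] at hKey' ⊢
        rw [Finset.sum_mul, Finset.sum_mul]
        refine Finset.sum_congr rfl fun x' _ => ?_
        by_cases hx' : (f x', g x') = w
        · rw [if_pos hx', if_pos hx']
          have hfx' : f x' = w.1 := congrArg Prod.fst hx'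
          rw [← hfx']
          exact hKey' x'
        · rw [if_neg hx', if_neg hx', zero_mul, zero_mul]
      have harg : pYW (jointD q (fun x => (f x, g x))) y w /
            ((∑ x, q x y) * pT2 q (fun x => (f x, g x)) w)
          = pYW (jointD q f) y w.1 / (pT2 q f w.1 * (∑ x', q x' y)) := by
        rw [div_eq_div_iff (ne_of_gt (mul_pos hpy hB)) (ne_of_gt (mul_pos hr hpy))]
        linear_combination (∑ x', q x' y) * hABrs
      rw [harg]
  · -- H(W*) ≤ I(X;W)
    rw [IXW_jointD q hq0]
    have hHT2 : HT2 q f = -∑ x, (∑ y, q x y) * Real.log (pT2 q f (f x)) := by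
      have hg := group_sum f (fun x => ∑ y, q x y) (fun t => Real.log (pT2 q f t))
      unfold HT2
      rw [← hg]
      rfl
    rw [hHT2]
    apply neg_le_neg
    refine Finset.sum_le_sum fun x _ => ?_
    rcases eq_or_lt_of_le (hqX0 x) with h0 | h0
    · rw [← h0, zero_mul, zero_mul]
    · have hB : 0 < pT2 q (fun x => (f x, g x)) (f x, g x) :=
        lt_of_lt_of_le h0 (qX_le_pT2 q hq0 (fun x => (f x, g x)) x)
      have hBr : pT2 q (fun x => (f x, g x)) (f x, g x) ≤ pT2 q f (f x) := by
        simp only [pT2]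
        refine Finset.sum_le_sum fun x' _ => ?_
        by_cases hx : (f x', g x') = (f x, g x)
        · rw [if_pos hx, if_pos (congrArg Prod.fst hx : f x' = f x)]
        · rw [if_neg hx]
          split
          · exact hqX0 x'
          · exact le_rfl
      exact mul_le_mul_of_nonneg_left (Real.log_le_log hB hBr) (hqX0 x)
  · -- I(X;W) ≤ H(X)
    rw [IXW_jointD q hq0]
    unfold HX2
    apply neg_le_neg
    refine Finset.sum_le_sum fun x _ => ?_
    rcases eq_or_lt_of_le (hqX0 x) with h0 | h0
    · rw [← h0, zero_mul, zero_mul]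
    · exact mul_le_mul_of_nonneg_left
        (Real.log_le_log h0 (qX_le_pT2 q hq0 (fun x => (f x, g x)) x)) (hqX0 x)
  · -- equality for g = id
    rw [IXW_jointD q hq0]
    unfold HX2
    rw [neg_inj]
    refine Finset.sum_congr rfl fun x _ => ?_
    have hpt : pT2 q (fun x => (f x, x)) (f x, x) = ∑ y, q x y := by
      simp only [pT2]
      rw [Fintype.sum_eq_single x (fun x' hne => by
        rw [if_neg (fun hE => hne ((Prod.ext_iff.mp hE).2))])]
      rw [if_pos rfl]
    rw [hpt]
end thm
/-- let `W* = f(X)` be a deterministic sufficient statistic for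
`Y` (`I(X;Y|W*) = 0`), and `W = (W*, g(X))` for any function `g`. Then
`Y – X – W` is a Markov chain, `I(W;Y) = I(X;Y)`, and
`H(W*) ≤ I(X;W) ≤ H(X)`; taking `g(X) = X` achieves `I(X;W) = H(X)`.
Hence the IB curve is flat at `I(X;Y)` on `[H(W*), H(X)]`. -/
theorem flat_portion_of_IB_curve
    {T₁ T₂ : Type*} [Fintype T₁] [Fintype T₂]
    (q : X → Y → ℝ) (hq : (∀ x y, 0 ≤ q x y) ∧ ∑ x, ∑ y, q x y = 1)
    (f : X → T₁) (hsuff : IXYgW (jointD q f) = 0) (g : X → T₂) :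
    Markov (jointD q (fun x => (f x, g x))) ∧
    IWY (jointD q (fun x => (f x, g x))) = IXY2 q ∧
    HT2 q f ≤ IXW (jointD q (fun x => (f x, g x))) ∧
    IXW (jointD q (fun x => (f x, g x))) ≤ HX2 q ∧
    IXW (jointD q (fun x => (f x, x))) = HX2 q := by
  exact flat_portion_of_IB_curve' q hq f hsuff g
end
end
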